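/- arXiv:2407.04471 — 6 statements merged into one kernel-verified Lean document; each statement's English description precedes it below -/
import Mathlib

section
/- Truthful bidding is a dominant strategy in the sponsored QA auction: for every advertiser i, every profile of the other advertisers' bids (b_j)_{j ≠ i}, and every alternative bid β ≥ 0, U_i(β) ≤ U_i(v_i), where U_i(β) = v_i − (M_i − u_i) if u_i + β > M_i and U_i(β) = 0 otherwise, with M_i = max_{j ≠ i} (u_j + b_j). -/
/-!
The price `M - u i` that advertiser `i` pays when she wins does not depend on her own bid, so
her bid only decides whether she receives the surplus `v i - (M - u i)` or nothing. Any such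
outcome is at most `max (v i - (M - u i)) 0`, and bidding `v i` wins exactly when the surplus
is positive, which attains this maximum.
-/

theorem ite_surplus_eq_max_zero {α : Type*} [AddCommGroup α] [LinearOrder α]
    [IsOrderedAddMonoid α] (u v M : α) :
    (if u + v > M then v - (M - u) else 0) = max (v - (M - u)) 0 := by
  have hwin : u + v > M ↔ 0 < v - (M - u) := by
    rw [sub_pos, sub_lt_iff_lt_add']
  split_ifs with h
  · exact (max_eq_left (hwin.mp h).le).symm
  · exact (max_eq_right (not_lt.mp (mt hwin.mpr h))).symm

theorem sponsored_qa_truthful_dominant_general {n : ℕ} (u v : Fin n → ℝ)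
    (i : Fin n) (M : ℝ)
    (β : ℝ) :
    (if u i + β > M then v i - (M - u i) else 0) ≤
      (if u i + v i > M then v i - (M - u i) else 0) := by
  rw [ite_surplus_eq_max_zero]
  exact ite_le_sup _ _ _

/-- Truthful bidding is a dominant strategy in the sponsored QA auction. -/
theorem sponsored_qa_truthful_dominant {n : ℕ} (hn : 2 ≤ n) (u v b : Fin n → ℝ)
    (hu : ∀ j, 0 ≤ u j) (hv : ∀ j, 0 ≤ v j) (hb : ∀ j, 0 ≤ b j)
    (i : Fin n) (M : ℝ)
    (hM : IsGreatest ((fun j => u j + b j) '' {j | j ≠ i}) M)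
    (β : ℝ) (hβ : 0 ≤ β) :
    (if u i + β > M then v i - (M - u i) else 0) ≤
      (if u i + v i > M then v i - (M - u i) else 0) :=
  sponsored_qa_truthful_dominant_general u v i M β
end

section
/- The winner of the sponsored QA auction is not necessarily the advertiser with the highest value (hence, under truthful bidding, not necessarily the highest bidder): with sponsored-answer models p_1^s = ε·p_o + (1−ε)·p_1 and p_2^s = (1−ε)·p_o + ε·p_2, advertiser values v_i = S(p_i^s, p_i) and user utilities u_i = S(p_i^s, p_o), there exists ε_0 > 0 such that for all ε ∈ (0, ε_0), both v_1 > v_2 and v_2 + u_2 > v_1 + u_1 hold; i.e., advertiser 2 wins the auction although advertiser 1 has the higher value. -/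
/-- Cross entropy between two distributions over a two-token vocabulary. -/
noncomputable def CE (p q : ℝ × ℝ) : ℝ := -(p.1 * Real.log q.1 + p.2 * Real.log q.2)

/-- Similarity based on symmetric cross entropy, with constant `A`. -/
noncomputable def Sim (A : ℝ) (p q : ℝ × ℝ) : ℝ := 2 * A - CE p q - CE q p

/-- Linear fusion of two unigram language models with weight `l`. -/
noncomputable def mix (l : ℝ) (p q : ℝ × ℝ) : ℝ × ℝ :=
  (l * p.1 + (1 - l) * q.1, l * p.2 + (1 - l) * q.2)

/-!
For small `ε > 0` each of `v₁, v₂, u₁, u₂` has the form `c(ε) log ε + G(ε)` with `c` and `G`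
continuous at `0`, so as `ε → 0⁺` only the coefficients `c(0)` matter; they are `0, 1/2, 2, 0`.
The sponsored answer `p₂ˢ ≈ (1, 3ε/2)` gives `v₂ ≈ (1/2) log ε`, while `p₁ˢ ≈ (2ε, 1)` is close to
`p₁` but far from `p_o`, giving `u₁ ≈ 2 log ε`. Hence `v₁ - v₂ ≈ -(1/2) log ε → ∞` and
`(v₂ + u₂) - (v₁ + u₁) ≈ -(3/2) log ε → ∞`.
-/

open Real Filter Set Topology

def HasLogCoeff (f : ℝ → ℝ) (a : ℝ) : Prop :=
  ∃ c G : ℝ → ℝ, ContinuousAt c 0 ∧ c 0 = a ∧ ContinuousAt G 0 ∧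
    ∀ᶠ ε in 𝓝[>] 0, f ε = c ε * log ε + G ε

namespace HasLogCoeff

variable {f g : ℝ → ℝ} {a b : ℝ}

theorem add (hf : HasLogCoeff f a) (hg : HasLogCoeff g b) : HasLogCoeff (f + g) (a + b) := by
  obtain ⟨c, G, hc, rfl, hG, hfe⟩ := hf
  obtain ⟨d, H, hd, rfl, hH, hge⟩ := hg
  refine ⟨c + d, G + H, hc.add hd, rfl, hG.add hH, ?_⟩
  filter_upwards [hfe, hge] with ε hf hg
  simp only [Pi.add_apply, hf, hg]
  ring

theorem sub (hf : HasLogCoeff f a) (hg : HasLogCoeff g b) : HasLogCoeff (f - g) (a - b) := by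
  obtain ⟨c, G, hc, rfl, hG, hfe⟩ := hf
  obtain ⟨d, H, hd, rfl, hH, hge⟩ := hg
  refine ⟨c - d, G - H, hc.sub hd, rfl, hG.sub hH, ?_⟩
  filter_upwards [hfe, hge] with ε hf hg
  simp only [Pi.sub_apply, hf, hg]
  ring

theorem tendsto_atTop (hf : HasLogCoeff f a) (ha : a < 0) : Tendsto f (𝓝[>] 0) atTop := by
  obtain ⟨c, G, hc, rfl, hG, hfe⟩ := hf
  have hlog : Tendsto (fun ε => c ε * log ε) (𝓝[>] 0) atTop :=
    (hc.tendsto.mono_left nhdsWithin_le_nhds).neg_mul_atBot ha tendsto_log_nhdsGT_zero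
  exact (hlog.atTop_add (hG.tendsto.mono_left nhdsWithin_le_nhds)).congr'
    (hfe.mono fun _ h => h.symm)

end HasLogCoeff

section SponsoredAnswers

theorem mix_sponsored_one (ε : ℝ) :
    mix ε (1 - ε, ε) (ε, 1 - ε) = (ε * (2 * (1 - ε)), ε ^ 2 + (1 - ε) ^ 2) := by
  simp only [mix, Prod.mk.injEq]
  constructor <;> ring

theorem mix_sponsored_two (ε : ℝ) :
    mix (1 - ε) (1 - ε, ε) ((1 : ℝ)/2, (1 : ℝ)/2) = (1 - 3 / 2 * ε + ε ^ 2, ε * (3 / 2 - ε)) := by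
  simp only [mix, Prod.mk.injEq]
  constructor <;> ring

variable (A : ℝ)

theorem hasLogCoeff_value_one :
    HasLogCoeff (fun ε => Sim A (mix ε (1 - ε, ε) (ε, 1 - ε)) (ε, 1 - ε)) 0 := by
  refine ⟨fun ε => 2 * ε * (1 - ε) + ε,
    fun ε => 2 * A + (ε ^ 2 + (1 - ε) ^ 2) * log (1 - ε) + ε * log (2 * (1 - ε))
      + (1 - ε) * log (ε ^ 2 + (1 - ε) ^ 2), by fun_prop, by norm_num,
    by fun_prop (disch := norm_num), ?_⟩
  filter_upwards [Ioo_mem_nhdsGT zero_lt_one] with ε ⟨h0, h1⟩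
  simp only [mix_sponsored_one, Sim, CE]
  rw [log_mul h0.ne' (by linarith)]
  ring

theorem hasLogCoeff_value_two :
    HasLogCoeff (fun ε => Sim A (mix (1 - ε) (1 - ε, ε) ((1 : ℝ)/2, (1 : ℝ)/2))
      ((1 : ℝ)/2, (1 : ℝ)/2)) (1 / 2) := by
  refine ⟨fun _ => 1 / 2,
    fun ε => 2 * A + log (1 / 2) + 1 / 2 * log (1 - 3 / 2 * ε + ε ^ 2)
      + 1 / 2 * log (3 / 2 - ε), by fun_prop, rfl, by fun_prop (disch := norm_num), ?_⟩
  filter_upwards [Ioo_mem_nhdsGT zero_lt_one] with ε ⟨h0, h1⟩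
  simp only [mix_sponsored_two, Sim, CE]
  rw [log_mul h0.ne' (by linarith)]
  ring

theorem hasLogCoeff_utility_one :
    HasLogCoeff (fun ε => Sim A (mix ε (1 - ε, ε) (ε, 1 - ε)) (1 - ε, ε)) 2 := by
  refine ⟨fun ε => ε ^ 2 + (1 - ε) ^ 2 + (1 - ε),
    fun ε => 2 * A + 2 * ε * (1 - ε) * log (1 - ε) + (1 - ε) * log (2 * (1 - ε))
      + ε * log (ε ^ 2 + (1 - ε) ^ 2), by fun_prop, by norm_num,
    by fun_prop (disch := norm_num), ?_⟩
  filter_upwards [Ioo_mem_nhdsGT zero_lt_one] with ε ⟨h0, h1⟩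
  simp only [mix_sponsored_one, Sim, CE]
  rw [log_mul h0.ne' (by linarith)]
  ring

theorem hasLogCoeff_utility_two :
    HasLogCoeff (fun ε => Sim A (mix (1 - ε) (1 - ε, ε) ((1 : ℝ)/2, (1 : ℝ)/2)) (1 - ε, ε)) 0 := by
  refine ⟨fun ε => ε * (3 / 2 - ε) + ε,
    fun ε => 2 * A + (1 - 3 / 2 * ε + ε ^ 2) * log (1 - ε)
      + (1 - ε) * log (1 - 3 / 2 * ε + ε ^ 2) + ε * log (3 / 2 - ε), by fun_prop, by norm_num,
    by fun_prop (disch := norm_num), ?_⟩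
  filter_upwards [Ioo_mem_nhdsGT zero_lt_one] with ε ⟨h0, h1⟩
  simp only [mix_sponsored_two, Sim, CE]
  rw [log_mul h0.ne' (by linarith)]
  ring

end SponsoredAnswers

/-- The winner of the auction is not necessarily the advertiser with the
highest value (hence not necessarily the highest bidder under truthful
bidding): with λ₁ = ε and λ₂ = 1-ε, for all small enough ε > 0, advertiser 1
has the higher value but advertiser 2 has the higher platform value. -/
theorem winner_not_highest_value (A : ℝ) :
    ∃ ε₀ : ℝ, 0 < ε₀ ∧ ∀ ε : ℝ, 0 < ε → ε < ε₀ →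
      (Sim A (mix ε (1 - ε, ε) (ε, 1 - ε)) (ε, 1 - ε) >
        Sim A (mix (1 - ε) (1 - ε, ε) ((1 : ℝ)/2, (1 : ℝ)/2)) ((1 : ℝ)/2, (1 : ℝ)/2)) ∧
      (Sim A (mix (1 - ε) (1 - ε, ε) ((1 : ℝ)/2, (1 : ℝ)/2)) ((1 : ℝ)/2, (1 : ℝ)/2) +
         Sim A (mix (1 - ε) (1 - ε, ε) ((1 : ℝ)/2, (1 : ℝ)/2)) (1 - ε, ε) >
       Sim A (mix ε (1 - ε, ε) (ε, 1 - ε)) (ε, 1 - ε) +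
         Sim A (mix ε (1 - ε, ε) (ε, 1 - ε)) (1 - ε, ε)) := by
  have hvalue := ((hasLogCoeff_value_one A).sub (hasLogCoeff_value_two A)).tendsto_atTop
    (by norm_num)
  have hplatform := (((hasLogCoeff_value_two A).add (hasLogCoeff_utility_two A)).sub
    ((hasLogCoeff_value_one A).add (hasLogCoeff_utility_one A))).tendsto_atTop (by norm_num)
  obtain ⟨ε₀, hε₀, hsub⟩ := mem_nhdsGT_iff_exists_Ioo_subset.mp
    ((hvalue.eventually_gt_atTop 0).and (hplatform.eventually_gt_atTop 0))
  refine ⟨ε₀, hε₀, fun ε h0 hε => ?_⟩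
  obtain ⟨hv, hp⟩ := hsub ⟨h0, hε⟩
  simp only [Pi.add_apply, Pi.sub_apply, sub_pos] at hv hp
  exact ⟨hv, hp⟩
end

section
/- The winner of the sponsored QA auction does not necessarily maximize user utility: with sponsored-answer models q_1^s = (1−ε)·p_o + ε·p_1 and q_2^s = (1/2)·p_o + (1/2)·p_2, advertiser values v_i = S(q_i^s, p_i) and user utilities u_i = S(q_i^s, p_o), there exists ε_0 > 0 such that for all ε ∈ (0, ε_0), both u_1 > u_2 and v_2 + u_2 > v_1 + u_1 hold; i.e., advertiser 2 wins the auction although the user utility of advertiser 1's sponsored answer is higher. -/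
open Filter Real Set Topology

theorem tendsto_mul_neg_log_add_atTop {c g : ℝ → ℝ} (hc : ContinuousWithinAt c (Ioi 0) 0)
    (hc₀ : 0 < c 0) (hg : ContinuousWithinAt g (Ioi 0) 0) :
    Tendsto (fun ε ↦ c ε * -log ε + g ε) (𝓝[>] 0) atTop :=
  (hc.tendsto.pos_mul_atTop hc₀ (tendsto_neg_atBot_atTop.comp tendsto_log_nhdsGT_zero)).atTop_add
    hg.tendsto

theorem exists_pos_forall_lt_of_eventually_nhdsGT {P : ℝ → Prop} (h : ∀ᶠ ε in 𝓝[>] 0, P ε) :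
    ∃ ε₀ : ℝ, 0 < ε₀ ∧ ∀ ε : ℝ, 0 < ε → ε < ε₀ → P ε := by
  obtain ⟨ε₀, hε₀, hP⟩ := mem_nhdsGT_iff_exists_Ioo_subset.mp h
  exact ⟨ε₀, hε₀, fun ε h0 h1 ↦ hP ⟨h0, h1⟩⟩

noncomputable def sponsored₁ (ε : ℝ) : ℝ × ℝ := mix (1 - ε) (1 - ε, ε) (ε, 1 - ε)

noncomputable def sponsored₂ (ε : ℝ) : ℝ × ℝ := mix (1 / 2) (1 - ε, ε) (1 / 2, 1 / 2)

theorem sponsored₁_eq (ε : ℝ) : sponsored₁ ε = (1 - 2 * ε * (1 - ε), 2 * ε * (1 - ε)) := by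
  ext <;> simp only [sponsored₁, mix] <;> ring

theorem sponsored₂_eq (ε : ℝ) : sponsored₂ ε = (3 / 4 - ε / 2, 1 / 4 + ε / 2) := by
  ext <;> simp only [sponsored₂, mix] <;> ring

theorem log_two_mul_mul_one_sub {ε : ℝ} (hε : ε ∈ Ioo (0 : ℝ) 1) :
    log (2 * ε * (1 - ε)) = log 2 + log ε + log (1 - ε) := by
  rw [log_mul (mul_pos two_pos hε.1).ne' (sub_pos.2 hε.2).ne', log_mul two_ne_zero hε.1.ne']

theorem tendsto_userUtility_gap_atTop (A : ℝ) :
    Tendsto (fun ε ↦ Sim A (sponsored₁ ε) (1 - ε, ε) - Sim A (sponsored₂ ε) (1 - ε, ε))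
      (𝓝[>] 0) atTop := by
  refine (tendsto_mul_neg_log_add_atTop (c := fun ε ↦ 1 / 4 - 5 * ε / 2 + 2 * ε ^ 2)
    (g := fun ε ↦ (1 / 4 - 3 * ε / 2 + 2 * ε ^ 2) * log (1 - ε)
      + (1 - ε) * log (1 - 2 * ε * (1 - ε)) + ε * (log 2 + log (1 - ε))
      - (1 - ε) * log (3 / 4 - ε / 2) - ε * log (1 / 4 + ε / 2))
    (by fun_prop) (by norm_num) (by fun_prop (disch := norm_num))).congr' ?_
  filter_upwards [Ioo_mem_nhdsGT zero_lt_one] with ε hε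
  simp only [Sim, CE, sponsored₁_eq, sponsored₂_eq, log_two_mul_mul_one_sub hε]
  ring

theorem tendsto_platformValue_gap_atTop (A : ℝ) :
    Tendsto (fun ε ↦ (Sim A (sponsored₂ ε) (1 / 2, 1 / 2) + Sim A (sponsored₂ ε) (1 - ε, ε))
      - (Sim A (sponsored₁ ε) (ε, 1 - ε) + Sim A (sponsored₁ ε) (1 - ε, ε))) (𝓝[>] 0) atTop := by
  refine (tendsto_mul_neg_log_add_atTop (c := fun ε ↦ 7 / 4 - ε / 2)
    (g := fun ε ↦ (3 / 2 - ε) * log (3 / 4 - ε / 2) + (1 / 2 + ε) * log (1 / 4 + ε / 2)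
      - (5 / 4 + ε / 2) * log (1 - ε) - log (1 - 2 * ε * (1 - ε)) - 2 * log 2)
    (by fun_prop) (by norm_num) (by fun_prop (disch := norm_num))).congr' ?_
  filter_upwards [Ioo_mem_nhdsGT zero_lt_one] with ε hε
  simp only [Sim, CE, sponsored₁_eq, sponsored₂_eq, log_two_mul_mul_one_sub hε, one_div, log_inv]
  ring

/-- The winner of the auction does not necessarily maximize user utility:
with λ₁ = 1-ε and λ₂ = 1/2, for all small enough ε > 0, advertiser 1's
sponsored answer has the higher user utility but advertiser 2 has the higher
platform value. -/
theorem winner_not_max_user_utility (A : ℝ) :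
    ∃ ε₀ : ℝ, 0 < ε₀ ∧ ∀ ε : ℝ, 0 < ε → ε < ε₀ →
      (Sim A (mix (1 - ε) (1 - ε, ε) (ε, 1 - ε)) (1 - ε, ε) >
        Sim A (mix ((1 : ℝ)/2) (1 - ε, ε) ((1 : ℝ)/2, (1 : ℝ)/2)) (1 - ε, ε)) ∧
      (Sim A (mix ((1 : ℝ)/2) (1 - ε, ε) ((1 : ℝ)/2, (1 : ℝ)/2)) ((1 : ℝ)/2, (1 : ℝ)/2) +
         Sim A (mix ((1 : ℝ)/2) (1 - ε, ε) ((1 : ℝ)/2, (1 : ℝ)/2)) (1 - ε, ε) >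
       Sim A (mix (1 - ε) (1 - ε, ε) (ε, 1 - ε)) (ε, 1 - ε) +
         Sim A (mix (1 - ε) (1 - ε, ε) (ε, 1 - ε)) (1 - ε, ε)) := by
  obtain ⟨ε₀, hε₀, hgaps⟩ := exists_pos_forall_lt_of_eventually_nhdsGT <|
    ((tendsto_userUtility_gap_atTop A).eventually_gt_atTop 0).and
      ((tendsto_platformValue_gap_atTop A).eventually_gt_atTop 0)
  exact ⟨ε₀, hε₀, fun ε h0 h1 ↦ (hgaps ε h0 h1).imp sub_pos.mp sub_pos.mp⟩
end

section
/- With the fusion weight λ_2 = 1−ε, so that p_2^s = (1−ε)·p_o + ε·p_2 = ((1−ε)² + ε/2, ε(1−ε) + ε/2), the symmetric cross-entropy dissimilarity between the sponsored answer and the ad of advertiser 2 satisfies lim_{ε→0⁺} [CE(p_2^s‖p_2) + CE(p_2‖p_2^s) + (1/2)·log ε] = log 2 − (1/2)·log(3/2) (equivalently, the advertiser value S(p_2^s, p_2) equals 2A − log 2 + (1/2)·log(3ε/2 − ε²) up to a term vanishing as ε → 0⁺). -/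
/-!
Against the uniform model `u = (1/2, 1/2)` one cross entropy is the constant `log 2` and the
other is `-(log q₁ + log q₂) / 2`. For the sponsored answer `q₂ = ε (3/2 - ε)`, so the added
`(1/2) log ε` cancels the only singular term, and what remains is continuous at `ε = 0`.
-/

open Filter Topology

lemma mix_fst_add_snd {l : ℝ} {p q : ℝ × ℝ} (hp : p.1 + p.2 = 1) (hq : q.1 + q.2 = 1) :
    (mix l p q).1 + (mix l p q).2 = 1 := by
  simp only [mix]
  linear_combination l * hp + (1 - l) * hq

lemma CE_uniform_right {p : ℝ × ℝ} (hp : p.1 + p.2 = 1) :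
    CE p ((1 : ℝ)/2, (1 : ℝ)/2) = Real.log 2 := by
  simp only [CE, one_div, Real.log_inv]
  linear_combination Real.log 2 * hp

lemma CE_uniform_left (q : ℝ × ℝ) :
    CE ((1 : ℝ)/2, (1 : ℝ)/2) q = -(Real.log q.1 + Real.log q.2) / 2 := by
  simp only [CE]
  ring

lemma mix_sponsored_fst (ε : ℝ) :
    (mix (1 - ε) (1 - ε, ε) ((1 : ℝ)/2, (1 : ℝ)/2)).1 = (1 - ε) ^ 2 + ε / 2 := by
  simp only [mix]
  ring

lemma mix_sponsored_snd (ε : ℝ) :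
    (mix (1 - ε) (1 - ε, ε) ((1 : ℝ)/2, (1 : ℝ)/2)).2 = ε * (3 / 2 - ε) := by
  simp only [mix]
  ring

/-- With λ₂ = 1-ε, the symmetric cross-entropy dissimilarity between advertiser 2's
sponsored answer and her ad satisfies
CE(p₂ˢ‖p₂) + CE(p₂‖p₂ˢ) + (1/2)·log ε → log 2 − (1/2)·log(3/2) as ε → 0⁺. -/
theorem ad2_value_asymptotics :
    Filter.Tendsto
      (fun ε : ℝ =>
        CE (mix (1 - ε) (1 - ε, ε) ((1 : ℝ)/2, (1 : ℝ)/2)) ((1 : ℝ)/2, (1 : ℝ)/2) +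
          CE ((1 : ℝ)/2, (1 : ℝ)/2) (mix (1 - ε) (1 - ε, ε) ((1 : ℝ)/2, (1 : ℝ)/2)) +
          (1/2) * Real.log ε)
      (nhdsWithin 0 (Set.Ioi 0))
      (nhds (Real.log 2 - (1/2) * Real.log (3/2))) := by
  set f : ℝ → ℝ := fun ε ↦
    Real.log 2 - (1/2) * Real.log ((1 - ε) ^ 2 + ε / 2) - (1/2) * Real.log (3 / 2 - ε)
  have hf : ContinuousAt f 0 := by fun_prop (disch := norm_num)
  have hlim : Tendsto f (𝓝[>] 0) (𝓝 (Real.log 2 - (1/2) * Real.log (3/2))) := by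
    simpa [f] using tendsto_nhdsWithin_of_tendsto_nhds hf.tendsto
  refine hlim.congr' ?_
  filter_upwards [Ioo_mem_nhdsGT (by norm_num : (0 : ℝ) < 3 / 2)] with ε ⟨hε, hε'⟩
  rw [CE_uniform_right (mix_fst_add_snd (by ring) (by norm_num)), CE_uniform_left,
    mix_sponsored_fst, mix_sponsored_snd, Real.log_mul hε.ne' (by linarith)]
  ring
end

section
/- With the fusion weight λ_1 = 1−ε, so that q_1^s = (1−ε)·p_o + ε·p_1 = ((1−ε)² + ε², 2ε(1−ε)), the symmetric cross-entropy dissimilarity between the sponsored answer and the ad of advertiser 1 satisfies lim_{ε→0⁺} [CE(q_1^s‖p_1) + CE(p_1‖q_1^s) + 2·log ε + log 2] = 0 (equivalently, the advertiser value S(q_1^s, p_1) equals 2A + log ε + log(2ε) up to a term vanishing as ε → 0⁺). -/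
/-!
Since `q₁ˢ = ((1-ε)² + ε², 2ε(1-ε))`, the `log ε` terms in the symmetric cross entropy add up to
`-(2 - 3ε + 2ε²) log ε` and `log q₁ˢ_b = log 2 + log ε + log (1-ε)`. After adding `2 log ε + log 2`,
what is left is `ε log ε (3 - 2ε)` plus terms with logarithms of quantities close to `1` or `2`,
all multiplied by something vanishing at `ε = 0`. Since `x log x` is continuous at `0`, the whole
remainder is continuous at `0`, where it vanishes.
-/

open Real Filter Topology

lemma mix_one_sub_swap (ε : ℝ) :
    mix (1 - ε) (1 - ε, ε) (ε, 1 - ε) = ((1 - ε) ^ 2 + ε ^ 2, 2 * ε * (1 - ε)) := by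
  simp only [mix, sub_sub_cancel, Prod.mk.injEq]
  constructor <;> ring

lemma symmCE_add_log_eq {ε : ℝ} (hε : ε ≠ 0) (hε' : 1 - ε ≠ 0) :
    CE (mix (1 - ε) (1 - ε, ε) (ε, 1 - ε)) (ε, 1 - ε) +
        CE (ε, 1 - ε) (mix (1 - ε) (1 - ε, ε) (ε, 1 - ε)) + 2 * log ε + log 2 =
      ε * log ε * (3 - 2 * ε) - (1 - ε) * (1 + 2 * ε) * log (1 - ε)
        - ε * log ((1 - ε) ^ 2 + ε ^ 2) + ε * log 2 := by
  have hlog : log (2 * ε * (1 - ε)) = log 2 + log ε + log (1 - ε) := by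
    rw [log_mul (mul_ne_zero two_ne_zero hε) hε', log_mul two_ne_zero hε]
  simp only [mix_one_sub_swap, CE, hlog]
  ring

lemma continuousAt_symmCE_remainder :
    ContinuousAt (fun ε : ℝ => ε * log ε * (3 - 2 * ε) - (1 - ε) * (1 + 2 * ε) * log (1 - ε)
        - ε * log ((1 - ε) ^ 2 + ε ^ 2) + ε * log 2) 0 := by
  have h₁ : ContinuousAt (fun ε : ℝ => log (1 - ε)) 0 :=
    (continuousAt_log (by norm_num)).comp (by fun_prop)
  have h₂ : ContinuousAt (fun ε : ℝ => log ((1 - ε) ^ 2 + ε ^ 2)) 0 :=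
    (continuousAt_log (by norm_num)).comp (by fun_prop)
  have h₀ : ContinuousAt (fun ε : ℝ => ε * log ε) 0 := continuous_mul_log.continuousAt
  fun_prop

/-- With λ₁ = 1-ε, the symmetric cross-entropy dissimilarity between advertiser 1's
sponsored answer and her ad satisfies
CE(q₁ˢ‖p₁) + CE(p₁‖q₁ˢ) + 2·log ε + log 2 → 0 as ε → 0⁺. -/
theorem ad1_value_asymptotics' :
    Filter.Tendsto
      (fun ε : ℝ =>
        CE (mix (1 - ε) (1 - ε, ε) (ε, 1 - ε)) (ε, 1 - ε) +
          CE (ε, 1 - ε) (mix (1 - ε) (1 - ε, ε) (ε, 1 - ε)) +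
          2 * Real.log ε + Real.log 2)
      (nhdsWithin 0 (Set.Ioi 0)) (nhds 0) := by
  have hlim := continuousAt_symmCE_remainder.tendsto.mono_left
    (nhdsWithin_le_nhds (s := Set.Ioi (0 : ℝ)))
  simp only [zero_mul, mul_zero, sub_zero, add_zero, log_one] at hlim
  refine hlim.congr' ?_
  filter_upwards [Ioo_mem_nhdsGT (zero_lt_one' ℝ)] with ε hε
  exact (symmCE_add_log_eq hε.1.ne' (sub_ne_zero.2 hε.2.ne')).symm
end

section
/- With the fusion weight λ_2 = 1/2, so that q_2^s = (1/2)·p_o + (1/2)·p_2 = (3/4 − ε/2, 1/4 + ε/2), the symmetric cross-entropy dissimilarity between the sponsored answer of advertiser 2 and the organic answer satisfies lim_{ε→0⁺} [CE(q_2^s‖p_o) + CE(p_o‖q_2^s) + (1/4)·log ε] = −log(3/4) (equivalently, the user utility S(q_2^s, p_o) equals 2A + (1/4)·log ε + log(3/4) up to a term vanishing as ε → 0⁺). -/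
/-!
Write `p = (1 - ε, ε)` and `q = mix l p r`. The only singular term of the symmetric cross
entropy is `-q.2 * log ε` in `CE q p`, and `q.2 = l * ε + (1 - l) * r.2`. Adding
`(1 - l) * r.2 * log ε` leaves `l * negMulLog ε`, which is continuous at `0`; all other terms
are continuous at `ε = 0` as long as `q` has nonzero entries there, so the limit is the value
at `ε = 0`, namely `-log (mix l (1, 0) r).1`.
-/

open Real Filter Topology

lemma CE_mix_add_CE_add_mul_log (l ε : ℝ) (r : ℝ × ℝ) :
    CE (mix l (1 - ε, ε) r) (1 - ε, ε) + CE (1 - ε, ε) (mix l (1 - ε, ε) r) +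
        (1 - l) * r.2 * log ε =
      -((mix l (1 - ε, ε) r).1 * log (1 - ε)) + l * negMulLog ε
        - (1 - ε) * log (mix l (1 - ε, ε) r).1 - ε * log (mix l (1 - ε, ε) r).2 := by
  simp only [CE, mix, negMulLog]
  ring

theorem tendsto_CE_mix_add_CE_add_mul_log {l : ℝ} {r : ℝ × ℝ}
    (h₁ : (mix l (1, 0) r).1 ≠ 0) (h₂ : (mix l (1, 0) r).2 ≠ 0) :
    Tendsto (fun ε => CE (mix l (1 - ε, ε) r) (1 - ε, ε) + CE (1 - ε, ε) (mix l (1 - ε, ε) r) +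
        (1 - l) * r.2 * log ε) (𝓝[>] 0) (𝓝 (-log (mix l (1, 0) r).1)) := by
  simp only [CE_mix_add_CE_add_mul_log]
  refine Tendsto.mono_left ?_ nhdsWithin_le_nhds
  have hcont : ContinuousAt (fun ε : ℝ => -((mix l (1 - ε, ε) r).1 * log (1 - ε))
      + l * negMulLog ε - (1 - ε) * log (mix l (1 - ε, ε) r).1
      - ε * log (mix l (1 - ε, ε) r).2) 0 := by
    have hnegMulLog := continuous_negMulLog.continuousAt (x := 0)
    simp only [mix]
    fun_prop (disch := norm_num [mix] at h₁ h₂ ⊢ <;> assumption)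
  simpa using hcont.tendsto

/-- With λ₂ = 1/2, the symmetric cross-entropy dissimilarity between advertiser 2's
sponsored answer and the organic answer satisfies
CE(q₂ˢ‖p_o) + CE(p_o‖q₂ˢ) + (1/4)·log ε → −log(3/4) as ε → 0⁺. -/
theorem ad2_user_utility_asymptotics' :
    Filter.Tendsto
      (fun ε : ℝ =>
        CE (mix ((1 : ℝ)/2) (1 - ε, ε) ((1 : ℝ)/2, (1 : ℝ)/2)) (1 - ε, ε) +
          CE (1 - ε, ε) (mix ((1 : ℝ)/2) (1 - ε, ε) ((1 : ℝ)/2, (1 : ℝ)/2)) +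
          (1/4) * Real.log ε)
      (nhdsWithin 0 (Set.Ioi 0)) (nhds (-Real.log (3/4))) := by
  have h := tendsto_CE_mix_add_CE_add_mul_log (l := 1/2) (r := (1/2, 1/2))
    (by norm_num [mix]) (by norm_num [mix])
  convert h using 3 <;> norm_num [mix]
end
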